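/- Slater's theorem (Theorem 1 of Slater 1974): if $G$ is a $k$-connected graph, $v$ a vertex of $G$ of degree at least $2k-2$, and $G'$ is obtained from $G$ by a $k$-vertex splitting of $v$ (replacing $v$ by adjacent vertices $a,b$, joining each former neighbor of $v$ to exactly one of $a$ or $b$, such that $\deg_{G'}(a)\ge k$ and $\deg_{G'}(b)\ge k$), then $G'$ is $k$-connected. -/

import Mathlib

/-- A graph on more than `k` vertices is `k`-connected if deleting any set of fewer
than `k` vertices leaves a connected graph. -/
def KConnected {V : Type} [Fintype V] (k : ℕ) (G : SimpleGraph V) : Prop :=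
  k < Fintype.card V ∧
    ∀ s : Finset V, s.card < k → (G.induce ((↑s : Set V)ᶜ)).Connected

/-- The graph obtained from `G` by splitting the vertex `v` into two adjacent vertices
`a = Sum.inr 0` and `b = Sum.inr 1`.  Every former neighbour `u` of `v` is joined to
exactly one of `a`, `b` (to `a` if `part u = true`, to `b` otherwise); all edges of `G`
not incident to `v` are retained. -/
def SplitGraph {V : Type} (G : SimpleGraph V) (v : V) (part : V → Bool) :
    SimpleGraph ({u : V // u ≠ v} ⊕ Fin 2) where
  Adj x y :=
    match x, y with
    | Sum.inl u, Sum.inl w => G.Adj u.1 w.1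
    | Sum.inl u, Sum.inr i => G.Adj u.1 v ∧ (part u.1 = true ↔ i = 0)
    | Sum.inr i, Sum.inl u => G.Adj u.1 v ∧ (part u.1 = true ↔ i = 0)
    | Sum.inr i, Sum.inr j => i ≠ j
  symm := ⟨by
    rintro (u | i) (w | j) h
    · exact h.symm
    · exact h
    · exact h
    · exact h.symm⟩
  loopless := ⟨by
    rintro (u | i) h
    · exact G.irrefl h
    · exact h rfl⟩

/-! Let `S'` be a set of fewer than `k` vertices of the split graph `G'` and `S` its image in `G`
under the projection `a, b ↦ v`. Then `|S| ≤ |S'| < k`, so `G - S` is connected. Lift `G - S`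
into `G' - S'` by `v ↦ a`: an edge `uv` of `G - S` becomes the edge `ua` or the path `u b a`,
so all lifted vertices lie in one component, and every vertex of `G' - S'` other than `a`, `b`
is lifted. If `v ∉ S`, both survive and are joined to the lift `a` of `v`. Otherwise one
of them lies in `S'`, and a survivor among `a`, `b` has at least `k > |S'|` neighbours, hence a
surviving neighbour, which is neither `a` nor `b` and so is lifted. -/

namespace SimpleGraph

variable {V W : Type*} {G : SimpleGraph V} {H : SimpleGraph W}

lemma Reachable.map_of_adj (f : V → W) (hf : ∀ ⦃x y⦄, G.Adj x y → H.Reachable (f x) (f y))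
    {x y : V} (h : G.Reachable x y) : H.Reachable (f x) (f y) := by
  rw [reachable_iff_reflTransGen] at h ⊢
  exact h.lift' f fun _ _ hxy => (reachable_iff_reflTransGen _ _).1 (hf hxy)

lemma Connected.of_map_adj (hG : G.Connected) (f : V → W)
    (hf : ∀ ⦃x y⦄, G.Adj x y → H.Reachable (f x) (f y))
    (hcover : ∀ w, ∃ x, H.Reachable (f x) w) : H.Connected := by
  have : Nonempty W := ⟨f hG.nonempty.some⟩
  refine ⟨fun w₁ w₂ => ?_⟩
  obtain ⟨x₁, h₁⟩ := hcover w₁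
  obtain ⟨x₂, h₂⟩ := hcover w₂
  exact h₁.symm.trans (((hG.preconnected x₁ x₂).map_of_adj f hf).trans h₂)

end SimpleGraph

namespace SplitGraph

open SimpleGraph

variable {V : Type} {G : SimpleGraph V} {v : V} {part : V → Bool}

@[simp]
lemma adj_inr_inl {i : Fin 2} {u : {u : V // u ≠ v}} :
    (SplitGraph G v part).Adj (.inr i) (.inl u) ↔ G.Adj u v ∧ (part u = true ↔ i = 0) := .rfl

@[simp]
lemma adj_inr_inr {i j : Fin 2} : (SplitGraph G v part).Adj (.inr i) (.inr j) ↔ i ≠ j := .rfl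

lemma card_vertex [Fintype V] [DecidableEq V] :
    Fintype.card ({u : V // u ≠ v} ⊕ Fin 2) = Fintype.card V + 1 := by
  have : 0 < Fintype.card V := Fintype.card_pos_iff.2 ⟨v⟩
  simp only [Fintype.card_sum, Fintype.card_fin, Fintype.card_subtype_compl,
    Fintype.card_unique]
  omega

def proj (v : V) : {u : V // u ≠ v} ⊕ Fin 2 → V := Sum.elim Subtype.val fun _ => v

lemma proj_eq_iff_eq_inl {x : {u : V // u ≠ v} ⊕ Fin 2} {w : {u : V // u ≠ v}} :
    proj v x = w ↔ x = .inl w := by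
  rcases x with u | i
  · simp [proj, Subtype.ext_iff]
  · simpa [proj] using w.2.symm

lemma proj_eq_self_iff {x : {u : V // u ≠ v} ⊕ Fin 2} : proj v x = v ↔ x.isRight := by
  rcases x with u | i
  · simpa [proj] using u.2
  · simp [proj]

lemma reachable_inr_zero_inl {T : Set ({u : V // u ≠ v} ⊕ Fin 2)} (h0 : .inr 0 ∈ T)
    (h1 : .inr 1 ∈ T) {w : {u : V // u ≠ v}} (hw : .inl w ∈ T) (hwv : G.Adj w v) :
    ((SplitGraph G v part).induce T).Reachable ⟨.inr 0, h0⟩ ⟨.inl w, hw⟩ := by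
  cases hpart : part w
  · have h01 : ((SplitGraph G v part).induce T).Adj ⟨.inr 0, h0⟩ ⟨.inr 1, h1⟩ := by simp
    have h1w : ((SplitGraph G v part).induce T).Adj ⟨.inr 1, h1⟩ ⟨.inl w, hw⟩ := by
      simp [hwv, hpart]
    exact h01.reachable.trans h1w.reachable
  · exact Adj.reachable (by simp [hwv, hpart])

variable [DecidableEq V]

def lift (v u : V) : {u : V // u ≠ v} ⊕ Fin 2 :=
  if h : u = v then .inr 0 else .inl ⟨u, h⟩

lemma lift_of_ne {u : V} (h : u ≠ v) : lift v u = .inl ⟨u, h⟩ := dif_neg h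

lemma lift_self : lift v v = .inr 0 := dif_pos rfl

@[simp]
lemma proj_lift (u : V) : proj v (lift v u) = u := by
  by_cases h : u = v
  · subst h; simp [lift_self, proj]
  · simp [lift_of_ne h, proj]

section liftOn

variable {U : Set V} {T : Set ({u : V // u ≠ v} ⊕ Fin 2)}

def liftOn (hUT : proj v ⁻¹' U ⊆ T) (u : U) : T := ⟨lift v u, hUT (by simp)⟩

lemma reachable_liftOn_of_adj (hUT : proj v ⁻¹' U ⊆ T) {u w : U} (h : G.Adj u w) :
    ((SplitGraph G v part).induce T).Reachable (liftOn hUT u) (liftOn hUT w) := by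
  have of_eq : ∀ u w : U, G.Adj u w → (u : V) = v →
      ((SplitGraph G v part).induce T).Reachable (liftOn hUT u) (liftOn hUT w) := by
    rintro ⟨u, hu⟩ ⟨w, hw⟩ h rfl
    have hwv : w ≠ u := h.ne.symm
    have hinr : ∀ i, .inr i ∈ T := fun i => hUT (by simpa [proj] using hu)
    have hu' : liftOn hUT ⟨u, hu⟩ = ⟨.inr 0, hinr 0⟩ := Subtype.ext lift_self
    have hw' : liftOn hUT ⟨w, hw⟩ = ⟨.inl ⟨w, hwv⟩, hUT hw⟩ := Subtype.ext (lift_of_ne hwv)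
    rw [hu', hw']
    exact reachable_inr_zero_inl _ (hinr 1) _ h.symm
  by_cases hu : (u : V) = v
  · exact of_eq u w h hu
  by_cases hw : (w : V) = v
  · exact (of_eq w u h.symm hw).symm
  refine Adj.reachable (show (SplitGraph G v part).Adj (lift v u) (lift v w) from ?_)
  rw [lift_of_ne hu, lift_of_ne hw]
  exact h

end liftOn

variable (S : Finset ({u : V // u ≠ v} ⊕ Fin 2))

lemma proj_preimage_compl_image_subset : proj v ⁻¹' (↑(S.image (proj v)))ᶜ ⊆ (↑S)ᶜ := by
  rw [Finset.coe_image, Set.preimage_compl]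
  exact Set.compl_subset_compl.2 (Set.subset_preimage_image _ _)

lemma exists_liftOn_eq_inl {w : {u : V // u ≠ v}} (hw : Sum.inl w ∉ S) :
    ∃ u, liftOn (proj_preimage_compl_image_subset S) u = ⟨.inl w, hw⟩ := by
  have hwU : (w : V) ∉ S.image (proj v) := by
    simpa [proj_eq_iff_eq_inl] using hw
  exact ⟨⟨w, hwU⟩, Subtype.ext (lift_of_ne w.2)⟩

lemma exists_reachable_liftOn
    (hdeg : ∀ i, S.card < ((SplitGraph G v part).neighborSet (.inr i)).ncard)
    (x : ↥(↑S : Set ({u : V // u ≠ v} ⊕ Fin 2))ᶜ) :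
    ∃ u, ((SplitGraph G v part).induce (↑S)ᶜ).Reachable
      (liftOn (proj_preimage_compl_image_subset S) u) x := by
  obtain ⟨w | i, hx⟩ := x
  · obtain ⟨u, hu⟩ := exists_liftOn_eq_inl S hx
    exact ⟨u, hu ▸ .rfl⟩
  by_cases hv : v ∈ S.image (proj v)
  · obtain ⟨y, hyS, hy⟩ := Finset.mem_image.1 hv
    obtain ⟨j, rfl⟩ := Sum.isRight_iff.1 (proj_eq_self_iff.1 hy)
    have hlt : (S : Set ({u : V // u ≠ v} ⊕ Fin 2)).ncard <
        ((SplitGraph G v part).neighborSet (.inr i)).ncard := by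
      rw [Set.ncard_coe_finset]; exact hdeg i
    obtain ⟨z, hz, hzS⟩ := Set.exists_mem_notMem_of_ncard_lt_ncard hlt
    rcases z with w | l
    · obtain ⟨u, hu⟩ := exists_liftOn_eq_inl S hzS
      exact ⟨u, hu ▸ (Adj.reachable hz).symm⟩
    · have hil : i ≠ l := hz
      have hij : i ≠ j := by rintro rfl; exact hx hyS
      obtain rfl : l = j := by omega
      exact absurd hyS hzS
  · have h0 : Sum.inr 0 ∉ S := fun h0 => hv (Finset.mem_image_of_mem _ h0)
    have hv0 : liftOn (proj_preimage_compl_image_subset S) ⟨v, hv⟩ = ⟨.inr 0, h0⟩ :=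
      Subtype.ext lift_self
    refine ⟨⟨v, hv⟩, hv0 ▸ ?_⟩
    by_cases hi : i = 0
    · subst hi; rfl
    · exact Adj.reachable (Ne.symm hi)

end SplitGraph

theorem slater_kVertexSplitting_general {V : Type} [Fintype V] [DecidableEq V] (k : ℕ)
    (G : SimpleGraph V) (v : V) (part : V → Bool)
    (hG : KConnected k G)
    (ha : k ≤ ((SplitGraph G v part).neighborSet (Sum.inr 0)).ncard)
    (hb : k ≤ ((SplitGraph G v part).neighborSet (Sum.inr 1)).ncard) :
    KConnected k (SplitGraph G v part) := by
  obtain ⟨hcard, hconn⟩ := hG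
  refine ⟨by rw [SplitGraph.card_vertex]; omega, fun S hS => ?_⟩
  have hdeg : ∀ i, S.card < ((SplitGraph G v part).neighborSet (.inr i)).ncard := by
    simp only [Fin.forall_fin_two]
    omega
  exact (hconn _ (Finset.card_image_le.trans_lt hS)).of_map_adj
    (SplitGraph.liftOn (SplitGraph.proj_preimage_compl_image_subset S))
    (fun _ _ => SplitGraph.reachable_liftOn_of_adj _) (SplitGraph.exists_reachable_liftOn S hdeg)

/-- Slater's theorem: if `G` is `k`-connected, `v` has degree at least `2k-2`, and `G'`
is obtained from `G` by a `k`-vertex splitting of `v` (both new vertices having degree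
at least `k`), then `G'` is `k`-connected. -/
theorem slater_kVertexSplitting {V : Type} [Fintype V] [DecidableEq V] (k : ℕ)
    (G : SimpleGraph V) (v : V) (part : V → Bool)
    (hG : KConnected k G)
    (hdeg : 2 * k - 2 ≤ (G.neighborSet v).ncard)
    (ha : k ≤ ((SplitGraph G v part).neighborSet (Sum.inr 0)).ncard)
    (hb : k ≤ ((SplitGraph G v part).neighborSet (Sum.inr 1)).ncard) :
    KConnected k (SplitGraph G v part) :=
  slater_kVertexSplitting_general k G v part hG ha hb
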